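/- arXiv:1103.2340 — 2 statements merged into one kernel-verified Lean document; each statement's English description precedes it below -/
import Mathlib

section
/- Let α ≥ 1 be a natural number such that p = 2^α − 1 is a prime number, and let F be a finite group of order 2^α admitting an automorphism of order p. Then the Frattini subgroup of F is trivial. -/
/-!
The cyclic group generated by `φ` has prime order `p = |F| - 1` and moves some element, so that
element has an orbit of size `p`; as automorphisms fix `1`, this orbit is all of `F \ {1}`. Hence
all nontrivial elements of `F` have the same order, which by Cauchy's theorem is `2`. So `F` is
elementary abelian, i.e. an `𝔽₂`-vector space, and every nonzero vector lies outside some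
hyperplane, which is a maximal subgroup.
-/

theorem frattini_eq_bot_of_forall_pow_eq_one {G : Type*} [CommGroup G] {p : ℕ} [Fact p.Prime]
    (h : ∀ g : G, g ^ p = 1) : frattini G = ⊥ := by
  have : Module (ZMod p) (Additive G) := AddCommGroup.zmodModule h
  refine eq_bot_iff.2 fun z hz => Subgroup.mem_bot.2 ?_
  by_contra hz1
  obtain ⟨f, hf⟩ : ∃ f : Additive G →ₗ[ZMod p] ZMod p, f (Additive.ofMul z) ≠ 0 := by
    by_contra! hf
    exact hz1 ((Module.forall_dual_apply_eq_zero_iff (ZMod p) (Additive.ofMul z)).1 hf)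
  have hker : IsCoatom (LinearMap.ker f) :=
    LinearMap.isCoatom_ker_of_surjective
      (LinearMap.surjective_of_ne_zero (by rintro rfl; simp at hf))
  let M : Subgroup G :=
    Subgroup.toAddSubgroup.symm ((AddSubgroup.toZModSubmodule p).symm (LinearMap.ker f))
  have hM : IsCoatom M := by
    simpa only [M, OrderIso.isCoatom_iff] using hker
  exact hf (frattini_le_coatom hM hz)

theorem frattini_eq_bot_of_forall_sq_eq_one {G : Type*} [Group G] (h : ∀ g : G, g ^ 2 = 1) :
    frattini G = ⊥ :=
  letI : CommGroup G :=
    { mul_comm := Commute.of_orderOf_dvd_two fun g => orderOf_dvd_of_pow_eq_one (h g) }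
  have : Fact (Nat.Prime 2) := ⟨Nat.prime_two⟩
  frattini_eq_bot_of_forall_pow_eq_one h

theorem MulAction.card_orbit_eq_card_of_prime {G X : Type*} [Group G] [Finite G]
    [MulAction G X] (hG : (Nat.card G).Prime) {g : G} {x : X} (hgx : g • x ≠ x) :
    Nat.card (orbit G x) = Nat.card G := by
  have hstab : stabilizer G x ≠ ⊤ := fun h => hgx (h ▸ Subgroup.mem_top g : g ∈ stabilizer G x)
  rw [Nat.card_coe_set_eq, ← index_stabilizer]
  exact (hG.eq_one_or_self_of_dvd _ (Subgroup.index_dvd_card _)).resolve_left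
    (mt Subgroup.index_eq_one.1 hstab)

theorem MulAut.orbit_zpowers_eq_compl_one {F : Type*} [Group F] [Finite F] {φ : MulAut F}
    (hφ : (orderOf φ).Prime) (hcard : orderOf φ = Nat.card F - 1) {x : F} (hx : φ x ≠ x) :
    MulAction.orbit (Subgroup.zpowers φ) x = {1}ᶜ := by
  have hsub : MulAction.orbit (Subgroup.zpowers φ) x ⊆ {1}ᶜ := by
    rintro _ ⟨ψ, rfl⟩ hψ
    have hx1 : x = 1 := (map_eq_one_iff (ψ : MulAut F) (MulEquiv.injective _)).1 hψ
    exact hx (by rw [hx1, map_one])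
  refine Set.eq_of_subset_of_ncard_le hsub ?_ (Set.toFinite _)
  rw [Set.ncard_compl, Set.ncard_singleton, ← Nat.card_coe_set_eq,
    MulAction.card_orbit_eq_card_of_prime (g := ⟨φ, Subgroup.mem_zpowers φ⟩)
      (by rwa [Nat.card_zpowers]) hx,
    Nat.card_zpowers, hcard]

theorem pow_prime_eq_one_of_forall_orderOf_eq {G : Type*} [Group G] [Finite G] {q : ℕ}
    (hq : q.Prime) (hdvd : q ∣ Nat.card G) {x : G}
    (h : ∀ y : G, y ≠ 1 → orderOf y = orderOf x) (y : G) : y ^ q = 1 := by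
  have : Fact q.Prime := ⟨hq⟩
  obtain ⟨g, hg⟩ := exists_prime_orderOf_dvd_card' q hdvd
  have hg1 : g ≠ 1 := fun h => hq.ne_one (hg ▸ orderOf_eq_one_iff.2 h)
  rcases eq_or_ne y 1 with rfl | hy
  · exact one_pow q
  · rw [← orderOf_dvd_iff_pow_eq_one, h y hy, ← h g hg1, hg]

theorem frattini_eq_bot_of_mersenne_automorphism_general
    {α : ℕ} (hp : Nat.Prime (2 ^ α - 1))
    {F : Type*} [Group F] [Finite F] (hcard : Nat.card F = 2 ^ α)
    (φ : F ≃* F) (hord : orderOf φ = 2 ^ α - 1) :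
    frattini F = ⊥ := by
  have hα : α ≠ 0 := by rintro rfl; norm_num at hp
  obtain ⟨x, hx⟩ : ∃ x, φ x ≠ x := by
    by_contra! hfix
    exact hp.ne_one (hord ▸ orderOf_eq_one_iff.2 (MulEquiv.ext hfix))
  have horbit := MulAut.orbit_zpowers_eq_compl_one (hord ▸ hp) (hcard ▸ hord) hx
  have horder : ∀ y : F, y ≠ 1 → orderOf y = orderOf x := by
    intro y hy
    obtain ⟨ψ, rfl⟩ : y ∈ MulAction.orbit (Subgroup.zpowers φ) x := horbit ▸ hy
    exact MulEquiv.orderOf_eq (ψ : MulAut F) x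
  exact frattini_eq_bot_of_forall_sq_eq_one
    (pow_prime_eq_one_of_forall_orderOf_eq Nat.prime_two (hcard ▸ dvd_pow_self 2 hα) horder)

/-- Let `α ≥ 1` be such that `p = 2^α - 1` is prime, and let `F` be a finite
group of order `2^α` admitting an automorphism of order `p`. Then the Frattini
subgroup of `F` is trivial. -/
theorem frattini_eq_bot_of_mersenne_automorphism
    {α : ℕ} (hα : 1 ≤ α) (hp : Nat.Prime (2 ^ α - 1))
    {F : Type*} [Group F] [Finite F] (hcard : Nat.card F = 2 ^ α)
    (φ : F ≃* F) (hord : orderOf φ = 2 ^ α - 1) :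
    frattini F = ⊥ :=
  frattini_eq_bot_of_mersenne_automorphism_general hp hcard φ hord
end

section
/- Let α ≥ 1 be a natural number such that p = 2^α − 1 is a prime number, and let F be a finite group of order 2^α admitting an automorphism of order p. Then F is abelian. -/
/-- Let `α ≥ 1` be such that `p = 2^α - 1` is prime, and let `F` be a finite
group of order `2^α` admitting an automorphism of order `p`. Then `F` is
abelian. -/
theorem comm_of_mersenne_automorphism
    {α : ℕ} (hα : 1 ≤ α) (hp : Nat.Prime (2 ^ α - 1))
    {F : Type*} [Group F] [Finite F] (hcard : Nat.card F = 2 ^ α)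
    (φ : F ≃* F) (hord : orderOf φ = 2 ^ α - 1) :
    ∀ a b : F, a * b = b * a := by
  classical
  have := Fintype.ofFinite F
  set p : ℕ := 2 ^ α - 1 with hpdef
  have hp2 : 2 ≤ p := hp.two_le
  haveI : Fact p.Prime := ⟨hp⟩
  haveI : Fact (Nat.Prime 2) := ⟨Nat.prime_two⟩
  have h2α : 1 ≤ 2 ^ α := Nat.one_le_two_pow
  have hcard' : Nat.card F = p + 1 := by omega
  -- the subgroup generated by φ in `MulAut F`
  set H : Subgroup (MulAut F) := Subgroup.zpowers (φ : MulAut F) with hHdef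
  have hH : Nat.card H = p := by rw [hHdef, Nat.card_zpowers, hord]
  have hpg : IsPGroup p H := IsPGroup.of_card (by rw [hH, pow_one])
  -- the fixed points of the action of H on F form a trivial subgroup
  have hfixmod := hpg.card_modEq_card_fixedPoints F
  have hfixsub : Nat.card (MulAction.fixedPoints H F) =
      Nat.card (FixedPoints.subgroup H F) := rfl
  have hdvd : Nat.card (FixedPoints.subgroup H F) ∣ Nat.card F :=
    Subgroup.card_subgroup_dvd_card _
  obtain ⟨β, hβle, hβ⟩ := (Nat.dvd_prime_pow Nat.prime_two).mp (hcard ▸ hdvd)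
  -- show the fixed subgroup is trivial
  have hfixtriv : Nat.card (FixedPoints.subgroup H F) = 1 := by
    rcases eq_or_lt_of_le hβle with hβα | hβα
    · -- β = α would force φ = 1
      exfalso
      have htop : FixedPoints.subgroup H F = ⊤ := by
        apply Subgroup.eq_top_of_card_eq
        rw [hβ, hβα, hcard]
      have hφ1 : (φ : MulAut F) = 1 := by
        ext x
        have hx : x ∈ FixedPoints.subgroup H F := htop ▸ Subgroup.mem_top x
        exact hx ⟨φ, Subgroup.mem_zpowers _⟩
      rw [show φ = (1 : MulAut F) from hφ1, orderOf_one] at hord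
      omega
    · -- β < α forces 2^β = 1
      have hmod : (p + 1) % p = 2 ^ β % p := by
        have := hfixmod
        rw [hfixsub, hβ, hcard'] at this
        exact this
      have h1 : (p + 1) % p = 1 := by
        rw [Nat.add_mod_left]
        exact Nat.mod_eq_of_lt (by omega)
      have hlt : 2 ^ β < p := by
        have h2 : 2 ^ (β + 1) ≤ 2 ^ α := Nat.pow_le_pow_right (by norm_num) hβα
        have h3 : 2 ^ (β + 1) = 2 * 2 ^ β := by ring
        have h4 : 1 ≤ 2 ^ β := Nat.one_le_two_pow
        omega
      have : 2 ^ β % p = 2 ^ β := Nat.mod_eq_of_lt hlt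
      rw [hβ]
      omega
  -- fixed points of the action are only the identity
  have hfix1 : ∀ x : F, x ∈ FixedPoints.subgroup H F → x = 1 := by
    intro x hx
    have := Subgroup.card_eq_one.mp hfixtriv
    rw [this] at hx
    exact hx
  -- Cauchy: an element of order 2
  have h2dvd : 2 ∣ Fintype.card F := by
    rw [← Nat.card_eq_fintype_card, hcard]
    exact dvd_pow_self 2 (by omega)
  obtain ⟨g, hg⟩ := exists_prime_orderOf_dvd_card 2 h2dvd
  have hg1 : g ≠ 1 := by
    intro h; rw [h, orderOf_one] at hg; omega
  -- the orbit of g under H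
  set O : Set F := MulAction.orbit H g with hOdef
  obtain ⟨n, hn⟩ := hpg.card_orbit g
  -- the orbit avoids 1
  have hOsub : O ⊆ {(1 : F)}ᶜ := by
    rintro x ⟨h, rfl⟩
    simp only [Set.mem_compl_iff, Set.mem_singleton_iff]
    intro hx1
    exact hg1 ((h : MulAut F).injective (by rw [map_one]; exact hx1))
  -- the complement of {1} has cardinality p
  have hcompl : ({(1 : F)}ᶜ : Set F).ncard = p := by
    have h1 : ({(1 : F)} : Set F).ncard = 1 := Set.ncard_singleton 1
    have h2 := Set.ncard_add_ncard_compl ({(1 : F)} : Set F)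
    rw [hcard'] at h2
    omega
  have hOcard : O.ncard = p ^ n := by
    rw [← Nat.card_coe_set_eq, hn]
  -- n ≠ 0 : otherwise g would be a fixed point
  have hn0 : n ≠ 0 := by
    intro h0
    rw [h0, pow_zero] at hOcard
    obtain ⟨a, ha⟩ := Set.ncard_eq_one.mp hOcard
    have hga : g = a := by
      have := MulAction.mem_orbit_self (M := H) g
      rw [show MulAction.orbit H g = O from rfl, ha] at this
      exact this
    apply hg1
    apply hfix1
    intro m
    have := MulAction.mem_orbit g m
    rw [show MulAction.orbit H g = O from rfl, ha, ← hga] at this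
    exact this
  -- orbit card ≤ p
  have hOle : O.ncard ≤ p := by
    rw [← hcompl]
    exact Set.ncard_le_ncard hOsub (Set.toFinite _)
  have hn1 : n = 1 := by
    by_contra hne
    have h2n : 2 ≤ n := by omega
    have : p ^ 2 ≤ p ^ n := Nat.pow_le_pow_right (by omega) h2n
    have : p ^ 2 ≤ p := by omega
    nlinarith
  have hOp : O.ncard = p := by rw [hOcard, hn1, pow_one]
  -- so the orbit is everything but 1
  have hOeq : O = {(1 : F)}ᶜ :=
    Set.eq_of_subset_of_ncard_le hOsub (by rw [hOp, hcompl]) (Set.toFinite _)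
  -- every nonidentity element has order 2
  have hsq : ∀ x : F, x * x = 1 := by
    intro x
    rcases eq_or_ne x 1 with rfl | hx1
    · simp
    · have hxO : x ∈ O := by
        rw [hOeq]
        simpa using hx1
      obtain ⟨h, rfl⟩ := hxO
      have hor : orderOf ((h : MulAut F) g) = 2 := by
        rw [← hg]
        exact orderOf_injective ((h : MulAut F) : F →* F)
          (h : MulAut F).injective g
      have h2 : (h : MulAut F) g * (h : MulAut F) g = 1 := by
        have := pow_orderOf_eq_one ((h : MulAut F) g)
        rw [hor, pow_two] at this
        exact this
      exact h2
  have hinv : ∀ x : F, x⁻¹ = x := fun x => inv_eq_of_mul_eq_one_right (hsq x)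
  intro a b
  calc a * b = (a * b)⁻¹ := (hinv _).symm
    _ = b⁻¹ * a⁻¹ := mul_inv_rev a b
    _ = b * a := by rw [hinv, hinv]
end
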